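/- Let ω be a permutation and k a positive integer. Suppose (a₁,b₁),…,(a_m,b_m) is a saturated k-Bruhat chain from ω such that b₁,…,b_m are pairwise distinct (a Sottile r-sequence). Then the sequence can be reordered to a saturated k-Bruhat chain (a₁',b₁'),…,(a_m',b_m') from ω to the same endpoint with a₁' ≥ a₂' ≥ ⋯ ≥ a_m'. -/

import Mathlib

/-!
Two adjacent steps `(a, b), (a', b')` of a saturated `k`-Bruhat chain with `a < a'` can be
exchanged. As `a' ≤ k < b` and `b ≠ b'`, the two transpositions are disjoint, so they commute and
every other permutation along the chain is unchanged. For the new middle step we use the cover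
criterion: `u ⋖ u t_{xy}` iff `u x < u y` and no position strictly between `x` and `y` carries a
value strictly between `u x` and `u y`. Passing from `u` to `u t_{ab}` only moves the values at `a`
and `b`, and the only possible witness against `u ⋖ u t_{a'b'}` is the position `b`, which is ruled
out by `u ⋖ u t_{ab}`. Bubble sort by such exchanges terminates because each exchange removes
an ascending pair of the sequence `a`.
-/

/-- Coxeter length of a permutation of `Fin n`, as the number of inversions. -/
def len {n : ℕ} (ω : Equiv.Perm (Fin n)) : ℕ :=
  (Finset.univ.filter (fun p : Fin n × Fin n => p.1 < p.2 ∧ ω p.2 < ω p.1)).card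

/-- `ω · t_{a₀,b₀} ⋯ t_{a_{i-1},b_{i-1}}`, the `i`-th permutation along the chain. -/
def chainProd {n : ℕ} (ω : Equiv.Perm (Fin n)) (a b : ℕ → Fin n) (i : ℕ) :
    Equiv.Perm (Fin n) :=
  ω * ((List.range i).map (fun t => Equiv.swap (a t) (b t))).prod

/-- `(a,b)` (with indices `0,…,m-1`) is a saturated `k`-Bruhat chain from `ω`. -/
def IsSatChain {n : ℕ} (ω : Equiv.Perm (Fin n)) (k : Fin n) (m : ℕ)
    (a b : ℕ → Fin n) : Prop :=
  (∀ t < m, a t ≤ k ∧ k < b t) ∧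
  ∀ i ≤ m, len (chainProd ω a b i) = len ω + i

open Finset Equiv

section SwapOrder
variable {α : Type*} [LinearOrder α] {x y p q : α}

theorem swap_apply_lt_swap_apply_iff (hxy : x < y) (hpq : p < q) :
    swap x y q < swap x y p ↔
      p = x ∧ q = y ∨ p = x ∧ x < q ∧ q < y ∨ x < p ∧ p < y ∧ q = y := by
  simp only [swap_apply_def]
  split_ifs <;> grind

theorem card_filter_lt_swap_apply_lt [Fintype α] [LocallyFiniteOrder α] (hxy : x < y)
    (P : α → α → Prop) [∀ a b, Decidable (P a b)] :
    #{r : α × α | r.1 < r.2 ∧ swap x y r.2 < swap x y r.1 ∧ P r.1 r.2} =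
      (if P x y then 1 else 0) +
        ∑ c ∈ Ioo x y, ((if P x c then 1 else 0) + if P c y then 1 else 0) := by
  have hR : ({r : α × α | r.1 < r.2 ∧ swap x y r.2 < swap x y r.1 ∧ P r.1 r.2} : Finset _) =
      ({(x, y)} ∪ ({x} ×ˢ Ioo x y ∪ Ioo x y ×ˢ {y})).filter (fun r => P r.1 r.2) := by
    ext ⟨i, j⟩
    simp only [mem_filter, mem_univ, true_and, mem_union, mem_singleton, mem_product,
      mem_Ioo, Prod.mk.injEq]
    constructor
    · rintro ⟨hij, h, hP⟩
      have := (swap_apply_lt_swap_apply_iff hxy hij).1 h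
      tauto
    · rintro ⟨h, hP⟩
      have hij : i < j := by rcases h with ⟨rfl, rfl⟩ | ⟨rfl, h⟩ | ⟨h, rfl⟩ <;> grind
      exact ⟨hij, (swap_apply_lt_swap_apply_iff hxy hij).2 (by tauto), hP⟩
  have hdisj : Disjoint ({x} ×ˢ Ioo x y) (Ioo x y ×ˢ {y}) := by
    simp only [disjoint_left, mem_product, mem_singleton, mem_Ioo]
    grind
  rw [hR, card_filter, sum_union (by simp), sum_union hdisj, sum_product, sum_product_right,
    sum_singleton, sum_singleton, sum_singleton, sum_add_distrib]

section Length
variable {n : ℕ}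

theorem len_mul (u σ : Perm (Fin n)) :
    len (u * σ) = #{r : Fin n × Fin n | σ⁻¹ r.1 < σ⁻¹ r.2 ∧ u r.2 < u r.1} :=
  card_equiv (σ.prodCongr σ) (fun r => by simp only [mem_filter, mem_univ, true_and]; simp)

theorem len_mul_swap {u : Perm (Fin n)} {x y : Fin n} (hxy : x < y) (hu : u x < u y) :
    len (u * swap x y) = len u + 1 + 2 * #{c ∈ Ioo x y | u x < u c ∧ u c < u y} := by
  -- `T` and `S` are the inversion sets of `u * swap x y` (up to relabelling) and of `u`; they
  -- differ only on the pairs whose order `swap x y` reverses.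
  set T : Finset (Fin n × Fin n) := {r | swap x y r.1 < swap x y r.2 ∧ u r.2 < u r.1}
  set S : Finset (Fin n × Fin n) := {r | r.1 < r.2 ∧ u r.2 < u r.1}
  have hTS : #(T \ S) =
      1 + ∑ c ∈ Ioo x y, ((if u x < u c then 1 else 0) + if u c < u y then 1 else 0) := by
    rw [card_equiv (prodComm _ _) (t := {r | r.1 < r.2 ∧ swap x y r.2 < swap x y r.1 ∧
      u r.1 < u r.2}) ?_]
    · exact (card_filter_lt_swap_apply_lt hxy fun a b => u a < u b).trans (by rw [if_pos hu])
    · intro r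
      simp only [T, S, mem_sdiff, mem_filter, mem_univ, true_and, prodComm_apply, Prod.fst_swap,
        Prod.snd_swap]
      grind [Equiv.apply_eq_iff_eq]
  have hST : #(S \ T) =
      ∑ c ∈ Ioo x y, ((if u c < u x then 1 else 0) + if u y < u c then 1 else 0) := by
    have hST' : S \ T = ({r : Fin n × Fin n |
        r.1 < r.2 ∧ swap x y r.2 < swap x y r.1 ∧ u r.2 < u r.1} : Finset _) := by
      ext r
      simp only [T, S, mem_sdiff, mem_filter, mem_univ, true_and]
      grind [Equiv.apply_eq_iff_eq]
    rw [hST']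
    exact (card_filter_lt_swap_apply_lt hxy fun a b => u b < u a).trans
      (by rw [if_neg hu.not_gt, zero_add])
  have hmid : ∀ c ∈ Ioo x y,
      ((if u x < u c then 1 else 0) + if u c < u y then 1 else 0) =
        ((if u c < u x then 1 else 0) + if u y < u c then 1 else 0) +
          2 * if u x < u c ∧ u c < u y then 1 else 0 := by
    intro c hc
    have hcx : u c ≠ u x := u.injective.ne (mem_Ioo.1 hc).1.ne'
    have hcy : u c ≠ u y := u.injective.ne (mem_Ioo.1 hc).2.ne
    split_ifs <;> grind
  rw [sum_congr rfl hmid, sum_add_distrib, ← mul_sum, ← card_filter] at hTS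
  have hT := card_sdiff_add_card_inter T S
  have hS := card_sdiff_add_card_inter S T
  rw [inter_comm] at hS
  rw [len_mul, swap_inv]
  change #T = #S + 1 + _
  omega

theorem len_mul_swap_lt {u : Perm (Fin n)} {x y : Fin n} (hxy : x < y) (hu : u y < u x) :
    len (u * swap x y) < len u := by
  have h := len_mul_swap (u := u * swap x y) hxy (by simpa using hu)
  rw [mul_assoc, swap_mul_self, mul_one] at h
  omega

theorem len_mul_swap_eq_add_one_iff {u : Perm (Fin n)} {x y : Fin n} (hxy : x < y) :
    len (u * swap x y) = len u + 1 ↔ u x < u y ∧ ∀ c ∈ Ioo x y, ¬(u x < u c ∧ u c < u y) := by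
  rcases lt_or_gt_of_ne (u.injective.ne hxy.ne) with hu | hu
  · rw [len_mul_swap hxy hu, ← filter_eq_empty_iff, ← card_eq_zero]
    simp [hu]
  · have := len_mul_swap_lt hxy hu
    simp only [hu.not_gt, false_and, iff_false]
    omega

theorem len_mul_swap_exchange {u : Perm (Fin n)} {a₁ b₁ a₂ b₂ : Fin n}
    (ha : a₁ < a₂) (hab : a₂ < b₁) (h₂ : a₂ < b₂) (hb : b₁ ≠ b₂)
    (h₁ : len (u * swap a₁ b₁) = len u + 1)
    (h₁₂ : len (u * swap a₁ b₁ * swap a₂ b₂) = len u + 2) :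
    len (u * swap a₂ b₂) = len u + 1 := by
  obtain ⟨hu₁, hmid₁⟩ := (len_mul_swap_eq_add_one_iff (ha.trans hab)).1 h₁
  set v := u * swap a₁ b₁
  obtain ⟨hv, hmidv⟩ := (len_mul_swap_eq_add_one_iff (u := v) h₂).1 (by omega)
  have hva₂ : v a₂ = u a₂ := by simp [v, swap_apply_of_ne_of_ne ha.ne' hab.ne]
  have hvb₂ : v b₂ = u b₂ := by simp [v, swap_apply_of_ne_of_ne (ha.trans h₂).ne' hb.symm]
  rw [hva₂, hvb₂] at hv hmidv
  refine (len_mul_swap_eq_add_one_iff h₂).2 ⟨hv, fun c hc hcmid => ?_⟩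
  by_cases hcb : c = b₁
  · subst hcb
    have hua : u a₂ < u a₁ := lt_of_le_of_ne
      (not_lt.1 fun h => hmid₁ a₂ (mem_Ioo.2 ⟨ha, hab⟩) ⟨h, hcmid.1⟩) (u.injective.ne ha.ne')
    exact hmidv c hc (by simpa [v] using ⟨hua, hu₁.trans hcmid.2⟩)
  · have hca : c ≠ a₁ := (ha.trans (mem_Ioo.1 hc).1).ne'
    exact hmidv c hc (by simpa [v, swap_apply_of_ne_of_ne hca hcb] using hcmid)

end Length

theorem swap_apply_lt_iff {x y m j : ℕ} (hx : x < m) (hy : y < m) :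
    swap x y j < m ↔ j < m := by
  rw [swap_apply_def]
  split_ifs <;> omega

section Chain
variable {n : ℕ} {ω : Perm (Fin n)} {a b : ℕ → Fin n}

theorem chainProd_zero : chainProd ω a b 0 = ω := by simp [chainProd]

theorem chainProd_succ (i : ℕ) :
    chainProd ω a b (i + 1) = chainProd ω a b i * swap (a i) (b i) := by
  simp [chainProd, List.range_succ, mul_assoc]

theorem chainProd_comp_swap {t i : ℕ}
    (hcomm : Commute (swap (a t) (b t)) (swap (a (t + 1)) (b (t + 1)))) (hi : i ≠ t + 1) :
    chainProd ω (a ∘ swap t (t + 1)) (b ∘ swap t (t + 1)) i = chainProd ω a b i := by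
  have hlow : ∀ i ≤ t,
      chainProd ω (a ∘ swap t (t + 1)) (b ∘ swap t (t + 1)) i = chainProd ω a b i := by
    intro i hi
    induction i with
    | zero => simp only [chainProd_zero]
    | succ i ih =>
      rw [chainProd_succ, chainProd_succ, ih (by omega), Function.comp_apply, Function.comp_apply,
        swap_apply_of_ne_of_ne (by omega) (by omega)]
  rcases le_or_gt i t with hit | hit
  · exact hlow i hit
  induction i, (show t + 2 ≤ i by omega) using Nat.le_induction with
  | base =>
    simp only [chainProd_succ, hlow t le_rfl, Function.comp_apply, swap_apply_left,
      swap_apply_right, mul_assoc, hcomm.eq]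
  | succ i hi ih =>
    rw [chainProd_succ, chainProd_succ, ih (by omega) (by omega), Function.comp_apply,
      Function.comp_apply, swap_apply_of_ne_of_ne (by omega) (by omega)]

theorem IsSatChain.commute_swap {k : Fin n} {m t : ℕ} (h : IsSatChain ω k m a b) (ht : t + 1 < m)
    (ha : a t ≠ a (t + 1)) (hb : b t ≠ b (t + 1)) :
    Commute (swap (a t) (b t)) (swap (a (t + 1)) (b (t + 1))) := by
  have h₀ := h.1 t (by omega)
  have h₁ := h.1 (t + 1) ht
  refine (Perm.disjoint_swap_swap ?_).commute
  simp only [List.nodup_cons, List.mem_cons, List.not_mem_nil, List.nodup_nil]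
  grind

theorem IsSatChain.comp_swap {k : Fin n} {m t : ℕ} (h : IsSatChain ω k m a b) (ht : t + 1 < m)
    (ha : a t < a (t + 1)) (hb : b t ≠ b (t + 1)) :
    IsSatChain ω k m (a ∘ swap t (t + 1)) (b ∘ swap t (t + 1)) := by
  have hcomm := h.commute_swap ht ha.ne hb
  obtain ⟨hk, hlen⟩ := h
  refine ⟨fun j hj => hk _ ((swap_apply_lt_iff (by omega) ht).2 hj), fun i hi => ?_⟩
  rcases eq_or_ne i (t + 1) with rfl | hi'
  · have hk₀ := hk t (by omega)
    have hk₁ := hk (t + 1) ht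
    have h₀ := hlen t (by omega)
    have h₁ := hlen (t + 1) hi
    have h₂ := hlen (t + 2) ht
    rw [chainProd_succ] at h₁
    rw [chainProd_succ, chainProd_succ] at h₂
    have hexch := len_mul_swap_exchange (u := chainProd ω a b t) ha
      (hk₁.1.trans_lt hk₀.2) (hk₁.1.trans_lt hk₁.2) hb (by omega) (by omega)
    simp only [chainProd_succ, chainProd_comp_swap hcomm (by omega : t ≠ t + 1),
      Function.comp_apply, swap_apply_left]
    omega
  · rw [chainProd_comp_swap hcomm hi']
    exact hlen i hi

end Chain

theorem perm_map_range_comp {γ : Type*} (f : ℕ → γ) {m : ℕ} (τ : Perm ℕ)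
    (hτ : ∀ j, τ j < m ↔ j < m) :
    ((List.range m).map f).Perm ((List.range m).map (f ∘ τ)) := by
  rw [← List.map_map]
  refine List.Perm.map f ((List.perm_ext_iff_of_nodup List.nodup_range
    (List.nodup_range.map τ.injective)).2 fun j => ?_)
  simp only [List.mem_range, List.mem_map]
  exact ⟨fun hj => ⟨τ.symm j, (hτ (τ.symm j)).1 (by simpa using hj), by simp⟩,
    fun ⟨i, hi, hij⟩ => hij ▸ (hτ i).2 hi⟩

section BubbleSort
variable {β : Type*} [LinearOrder β]

def ascentCount (m : ℕ) (a : ℕ → β) : ℕ :=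
  #{p ∈ range m ×ˢ range m | p.1 < p.2 ∧ a p.1 < a p.2}

theorem ascentCount_comp_swap_lt {m t : ℕ} {a : ℕ → β} (ht : t + 1 < m) (h : a t < a (t + 1)) :
    ascentCount m (a ∘ swap t (t + 1)) < ascentCount m a := by
  have hτ (j : ℕ) : swap t (t + 1) j < m ↔ j < m := swap_apply_lt_iff (by omega) ht
  rw [ascentCount, card_equiv ((swap t (t + 1)).prodCongr (swap t (t + 1)))
    (t := {p ∈ range m ×ˢ range m | swap t (t + 1) p.1 < swap t (t + 1) p.2 ∧ a p.1 < a p.2})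
    (fun p => by simp [hτ])]
  refine card_lt_card ((ssubset_iff_of_subset fun p hp => ?_).2 ⟨(t, t + 1), ?_, ?_⟩)
  · simp only [mem_filter, mem_product, mem_range] at hp ⊢
    refine ⟨hp.1, ?_, hp.2.2⟩
    rcases lt_trichotomy p.1 p.2 with hlt | heq | hgt
    · exact hlt
    · exact absurd hp.2.2 (heq ▸ lt_irrefl _)
    · rcases (swap_apply_lt_swap_apply_iff t.lt_succ_self hgt).1 hp.2.1 with ⟨h₂, h₁⟩ | h' | h'
      · rw [h₁, h₂] at hp
        exact absurd hp.2.2 h.not_gt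
      all_goals omega
  · simp [ht, h, show t < m by omega]
  · simp

theorem exists_antitone_of_swap_closed {m : ℕ} (P : (ℕ → β) → Prop)
    (hP : ∀ a, P a → ∀ t, t + 1 < m → a t < a (t + 1) → P (a ∘ swap t (t + 1)))
    {a : ℕ → β} (ha : P a) : ∃ a', P a' ∧ ∀ t, t + 1 < m → a' (t + 1) ≤ a' t := by
  induction hN : ascentCount m a using Nat.strong_induction_on generalizing a with
  | _ N ih =>
    by_cases hasc : ∃ t, t + 1 < m ∧ a t < a (t + 1)
    · obtain ⟨t, ht, hlt⟩ := hasc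
      exact ih _ (hN ▸ ascentCount_comp_swap_lt ht hlt) (hP a ha t ht hlt) rfl
    · push Not at hasc
      exact ⟨a, ha, hasc⟩

end BubbleSort

theorem stmt6 {n : ℕ} (ω : Equiv.Perm (Fin n)) (k : Fin n) (m : ℕ)
    (a b : ℕ → Fin n) (hchain : IsSatChain ω k m a b)
    (hdist : ∀ s < m, ∀ t < m, b s = b t → s = t) :
    ∃ a' b' : ℕ → Fin n,
      IsSatChain ω k m a' b' ∧
      chainProd ω a' b' m = chainProd ω a b m ∧
      (∀ t, t + 1 < m → a' (t + 1) ≤ a' t) ∧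
      ((List.range m).map (fun t => (a t, b t))).Perm
        ((List.range m).map (fun t => (a' t, b' t))) := by
  let Reordering (a' : ℕ → Fin n) : Prop := ∃ b',
    IsSatChain ω k m a' b' ∧ (∀ s < m, ∀ t < m, b' s = b' t → s = t) ∧
      chainProd ω a' b' m = chainProd ω a b m ∧
      ((List.range m).map (fun t => (a t, b t))).Perm ((List.range m).map (fun t => (a' t, b' t)))
  have hstep : ∀ a', Reordering a' → ∀ t, t + 1 < m → a' t < a' (t + 1) →
      Reordering (a' ∘ swap t (t + 1)) := by
    rintro a' ⟨b', hc, hd, he, hp⟩ t ht hlt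
    have hτ (j : ℕ) : swap t (t + 1) j < m ↔ j < m := swap_apply_lt_iff (by omega) ht
    have hb : b' t ≠ b' (t + 1) := fun h => by have := hd t (by omega) (t + 1) ht h; omega
    refine ⟨b' ∘ swap t (t + 1), hc.comp_swap ht hlt hb, fun s hs u hu h => ?_,
      (chainProd_comp_swap (hc.commute_swap ht hlt.ne hb) (by omega)).trans he,
      hp.trans (perm_map_range_comp _ _ hτ)⟩
    simpa using hd _ ((hτ s).2 hs) _ ((hτ u).2 hu) h
  obtain ⟨a', ⟨b', hc, -, he, hp⟩, hanti⟩ :=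
    exists_antitone_of_swap_closed Reordering hstep ⟨b, hchain, hdist, rfl, List.Perm.refl _⟩
  exact ⟨a', b', hc, he, hanti, hp⟩
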